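/- Let f : ℕ → ℕ → ℤ satisfy Σ_{d=1}^{n} (−1)^{d−1} f(n,d) = 1 for every n ≥ 1, and for l ≥ 1 let f_l(n,d) = Σ_{n₁+⋯+n_l=n, d₁+⋯+d_l=d, n_i≥d_i≥1} (n choose n₁,…,n_l) ∏_{i=1}^{l} f(n_i,d_i). Then Σ_{d=l}^{n} (−1)^{d−l} f_l(n,d) = l! · S(n,l), where S(n,l) is the Stirling number of the second kind. -/

import Mathlib

open Finset

/-- The Stirling numbers of the second kind, via the recurrence
`S(n+1,l+1) = (l+1)·S(n,l+1) + S(n,l)`. -/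
def stirling2 : ℕ → ℕ → ℕ
  | 0, 0 => 1
  | 0, _ + 1 => 0
  | _ + 1, 0 => 0
  | n + 1, l + 1 => (l + 1) * stirling2 n (l + 1) + stirling2 n l

/-- The `l`-fold multinomial convolution
`f_l(n,d) = Σ_{n₁+⋯+n_l=n, d₁+⋯+d_l=d, nᵢ≥dᵢ≥1} (n choose n₁,…,n_l) ∏ f(nᵢ,dᵢ)`. -/
def conv (f : ℕ → ℕ → ℤ) (l n d : ℕ) : ℤ :=
  ∑ ν : Fin l → Fin (n + 1), ∑ δ : Fin l → Fin (n + 1),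
    if (∑ i, (ν i : ℕ)) = n ∧ (∑ i, (δ i : ℕ)) = d ∧
        (∀ i, 1 ≤ (δ i : ℕ) ∧ (δ i : ℕ) ≤ (ν i : ℕ)) then
      (Nat.multinomial Finset.univ (fun i => (ν i : ℕ)) : ℤ) * ∏ i, f (ν i) (δ i)
    else 0

lemma stirling2_zero (n : ℕ) : stirling2 n 0 = if n = 0 then 1 else 0 := by
  cases n <;> simp [stirling2]

lemma stirling2_one (n : ℕ) (hn : 1 ≤ n) : stirling2 n 1 = 1 := by
  induction n with
  | zero => omega
  | succ m ih =>
    rcases Nat.eq_zero_or_pos m with h | h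
    · subst h; rfl
    · show 1 * stirling2 m 1 + stirling2 m 0 = 1
      rw [ih h, stirling2_zero, if_neg (by omega)]

lemma key (n : ℕ) : ∀ l, ∑ m ∈ Icc 1 n, n.choose m * (l.factorial * stirling2 (n-m) l)
    = (l+1).factorial * stirling2 n (l+1) := by
  induction n with
  | zero => intro l; simp [stirling2]
  | succ n ih =>
    intro l
    have hB : ∑ m ∈ Icc 1 (n+1), (n+1).choose m * (l.factorial * stirling2 (n+1-m) l)
        = (∑ m ∈ Icc 1 (n+1), n.choose (m-1) * (l.factorial * stirling2 (n+1-m) l))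
        + ∑ m ∈ Icc 1 (n+1), n.choose m * (l.factorial * stirling2 (n+1-m) l) := by
      rw [← Finset.sum_add_distrib]
      refine Finset.sum_congr rfl fun m hm => ?_
      simp only [mem_Icc] at hm
      obtain ⟨m', rfl⟩ : ∃ m', m = m' + 1 := ⟨m - 1, by omega⟩
      rw [Nat.choose_succ_succ', Nat.add_sub_cancel, add_mul]
    have hre : ∀ (N : ℕ) (g : ℕ → ℕ), ∑ m ∈ Icc 1 N, g m = ∑ i ∈ range N, g (1+i) := by
      intro N g
      rw [← Finset.Ico_add_one_right_eq_Icc, Finset.sum_Ico_eq_sum_range]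
      simp
    have hB1 : ∑ m ∈ Icc 1 (n+1), n.choose (m-1) * (l.factorial * stirling2 (n+1-m) l)
        = (l+1).factorial * stirling2 n (l+1) + l.factorial * stirling2 n l := by
      rw [hre, Finset.sum_range_succ', ← ih l, hre]
      congr 1
      · refine Finset.sum_congr rfl fun i _ => ?_
        have h1 : 1 + (i + 1) - 1 = 1 + i := by omega
        have h2 : n + 1 - (1 + (i + 1)) = n - (1 + i) := by omega
        rw [h1, h2]
      · simp
    have hB2 : ∑ m ∈ Icc 1 (n+1), n.choose m * (l.factorial * stirling2 (n+1-m) l)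
        = ∑ m ∈ Icc 1 n, n.choose m * (l.factorial * stirling2 ((n-m)+1) l) := by
      rw [Finset.sum_Icc_succ_top (by omega)]
      rw [Nat.choose_succ_self, zero_mul, add_zero]
      refine Finset.sum_congr rfl fun m hm => ?_
      simp only [mem_Icc] at hm
      have : n + 1 - m = n - m + 1 := by omega
      rw [this]
    rw [hB, hB1, hB2]
    cases l with
    | zero =>
      have : ∀ k, stirling2 (k+1) 0 = 0 := fun k => rfl
      simp only [this, Nat.mul_zero, Finset.sum_const_zero, mul_zero, add_zero]
      have h1 : stirling2 (n+1) 1 = 1 * stirling2 n 1 + stirling2 n 0 := rfl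
      simp [Nat.factorial, h1]
    | succ l' =>
      have hrec : ∀ k, stirling2 (k+1) (l'+1) = (l'+1) * stirling2 k (l'+1) + stirling2 k l' :=
        fun k => rfl
      have hsplit : ∑ m ∈ Icc 1 n, n.choose m * ((l'+1).factorial * stirling2 ((n-m)+1) (l'+1))
          = (l'+1) * ∑ m ∈ Icc 1 n, n.choose m * ((l'+1).factorial * stirling2 (n-m) (l'+1))
            + (l'+1) * ∑ m ∈ Icc 1 n, n.choose m * (l'.factorial * stirling2 (n-m) l') := by
        rw [Finset.mul_sum, Finset.mul_sum, ← Finset.sum_add_distrib]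
        refine Finset.sum_congr rfl fun m hm => ?_
        rw [hrec]
        rw [Nat.factorial_succ]
        ring
      rw [hsplit, ih (l'+1), ih l']
      have h2 : stirling2 (n+1) (l'+2) = (l'+2) * stirling2 n (l'+2) + stirling2 n (l'+1) := rfl
      rw [h2]
      simp only [Nat.factorial_succ]
      ring

lemma multinomial_map {α β : Type*} (e : α ↪ β) (s : Finset α) (f : β → ℕ) :
    Nat.multinomial (s.map e) f = Nat.multinomial s (f ∘ e) := by
  simp [Nat.multinomial, Finset.sum_map, Finset.prod_map, Function.comp]

def T (l n : ℕ) : ℤ :=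
  ∑ ν ∈ Fintype.piFinset (fun _ : Fin l => Finset.Icc 1 n),
    if (∑ i, ν i) = n then (Nat.multinomial Finset.univ ν : ℤ) else 0

lemma T_zero (n : ℕ) : T 0 n = if n = 0 then 1 else 0 := by
  simp [T, eq_comm]

lemma T_of_le {l n N : ℕ} (h : n ≤ N) :
    ∑ ν ∈ Fintype.piFinset (fun _ : Fin l => Finset.Icc 1 N),
      (if (∑ i, ν i) = n then (Nat.multinomial Finset.univ ν : ℤ) else 0) = T l n := by
  rw [T]
  symm
  apply Finset.sum_subset
  · intro ν hν
    rw [Fintype.mem_piFinset] at hν ⊢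
    intro i
    have := hν i
    simp only [mem_Icc] at this ⊢
    omega
  · intro ν hν hν'
    rw [Fintype.mem_piFinset] at hν hν'
    push_neg at hν'
    obtain ⟨i, hi⟩ := hν'
    have h1 := hν i
    simp only [mem_Icc] at h1 hi
    have h2 : n < ν i := by omega
    have h3 : ν i ≤ ∑ j, ν j :=
      Finset.single_le_sum (fun j _ => Nat.zero_le _) (Finset.mem_univ i)
    rw [if_neg (by omega)]

lemma sum_piFinset_cons {M : Type*} [AddCommMonoid M] (l : ℕ) (s : Finset ℕ)
    (F : (Fin (l+1) → ℕ) → M) :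
    ∑ ν ∈ Fintype.piFinset (fun _ : Fin (l+1) => s), F ν
      = ∑ p ∈ s ×ˢ Fintype.piFinset (fun _ : Fin l => s), F (Fin.cons p.1 p.2) := by
  apply Finset.sum_nbij' (i := fun ν => (ν 0, Fin.tail ν)) (j := fun p => Fin.cons p.1 p.2)
  · intro ν hν
    rw [Fintype.mem_piFinset] at hν
    rw [Finset.mem_product, Fintype.mem_piFinset]
    exact ⟨hν 0, fun i => hν i.succ⟩
  · intro p hp
    rw [Finset.mem_product, Fintype.mem_piFinset] at hp
    rw [Fintype.mem_piFinset]
    intro i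
    refine Fin.cases ?_ ?_ i
    · simpa using hp.1
    · intro j; simpa using hp.2 j
  · intro ν _; exact Fin.cons_self_tail ν
  · intro p _; simp [Fin.tail_cons]
  · intro ν _; exact congrArg F (Fin.cons_self_tail ν).symm

lemma mult_cons (l : ℕ) (m : ℕ) (ρ : Fin l → ℕ) :
    Nat.multinomial Finset.univ (Fin.cons m ρ : Fin (l+1) → ℕ)
      = (m + ∑ i, ρ i).choose m * Nat.multinomial Finset.univ ρ := by
  rw [Fin.univ_succ, Nat.multinomial_cons, multinomial_map]
  simp [Finset.sum_map, Function.comp_def]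

lemma T_succ (l n : ℕ) :
    T (l+1) n = ∑ m ∈ Icc 1 n, (n.choose m : ℤ) * T l (n-m) := by
  rw [T, sum_piFinset_cons, Finset.sum_product]
  refine Finset.sum_congr rfl fun m hm => ?_
  simp only [mem_Icc] at hm
  rw [← T_of_le (Nat.sub_le n m), Finset.mul_sum]
  refine Finset.sum_congr rfl fun ρ hρ => ?_
  rw [Fin.sum_cons]
  by_cases h : m + ∑ i, ρ i = n
  · rw [if_pos h, if_pos (by omega), mult_cons]
    have : m + ∑ i, ρ i = n := h
    rw [this]
    push_cast
    ring
  · rw [if_neg h, if_neg (by omega), mul_zero]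

lemma T_eq (l : ℕ) : ∀ n, T l n = (l.factorial : ℤ) * stirling2 n l := by
  induction l with
  | zero =>
    intro n
    rw [T_zero, stirling2_zero]
    cases n <;> simp
  | succ l ih =>
    intro n
    rw [T_succ]
    simp only [ih]
    have hk := key n l
    have : ∑ m ∈ Icc 1 n, (n.choose m : ℤ) * ((l.factorial : ℤ) * stirling2 (n-m) l)
        = ((∑ m ∈ Icc 1 n, n.choose m * (l.factorial * stirling2 (n-m) l) : ℕ) : ℤ) := by
      push_cast
      rfl
    rw [this, hk]
    push_cast
    ring

open Fin.NatCast in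
lemma sum_fin_icc {n : ℕ} (c : Fin (n+1)) (g : ℕ → ℤ) :
    ∑ k ∈ Finset.univ.filter (fun k : Fin (n+1) => 1 ≤ (k:ℕ) ∧ (k:ℕ) ≤ (c:ℕ)), g (k:ℕ)
      = ∑ m ∈ Icc 1 (c:ℕ), g m := by
  apply Finset.sum_nbij' (i := fun k : Fin (n+1) => (k:ℕ)) (j := fun m => (m : Fin (n+1)))
  · intro k hk
    simp only [Finset.mem_filter, Finset.mem_univ, true_and] at hk
    simp only [mem_Icc]
    omega
  · intro m hm
    simp only [mem_Icc] at hm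
    have hc : (c : ℕ) ≤ n := Nat.lt_succ_iff.mp c.isLt
    have hmn : m < n + 1 := by omega
    simp only [Finset.mem_filter, Finset.mem_univ, true_and, Fin.val_cast_of_lt hmn]
    omega
  · intro k _; exact Fin.cast_val_eq_self k
  · intro m hm
    simp only [mem_Icc] at hm
    have hc : (c : ℕ) ≤ n := Nat.lt_succ_iff.mp c.isLt
    exact Fin.val_cast_of_lt (by omega)
  · intro k _; rfl


/-- if `Σ_{d=1}^{n} (−1)^{d−1} f(n,d) = 1` for all `n ≥ 1`, then
`Σ_{d=l}^{n} (−1)^{d−l} f_l(n,d) = l!·S(n,l)`. -/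
theorem statement1 (f : ℕ → ℕ → ℤ)
    (hf : ∀ n, 1 ≤ n → ∑ d ∈ Icc 1 n, (-1 : ℤ) ^ (d - 1) * f n d = 1)
    (l : ℕ) (hl : 1 ≤ l) (n : ℕ) :
    ∑ d ∈ Icc l n, (-1 : ℤ) ^ (d - l) * conv f l n d = (Nat.factorial l : ℤ) * stirling2 n l := by
  rw [← T_eq]
  have step1 : ∑ d ∈ Icc l n, (-1 : ℤ) ^ (d - l) * conv f l n d
      = ∑ ν : Fin l → Fin (n + 1), ∑ δ : Fin l → Fin (n + 1),
          ∑ d ∈ Icc l n, (-1 : ℤ) ^ (d - l) *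
            (if (∑ i, (ν i : ℕ)) = n ∧ (∑ i, (δ i : ℕ)) = d ∧
                (∀ i, 1 ≤ (δ i : ℕ) ∧ (δ i : ℕ) ≤ (ν i : ℕ)) then
              (Nat.multinomial Finset.univ (fun i => (ν i : ℕ)) : ℤ) * ∏ i, f (ν i) (δ i)
            else 0) := by
    simp only [conv, Finset.mul_sum]
    rw [Finset.sum_comm]
    exact Finset.sum_congr rfl fun ν _ => Finset.sum_comm
  rw [step1]
  -- collapse the d-sum
  have step2 : ∀ ν δ : Fin l → Fin (n + 1),
      ∑ d ∈ Icc l n, (-1 : ℤ) ^ (d - l) *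
            (if (∑ i, (ν i : ℕ)) = n ∧ (∑ i, (δ i : ℕ)) = d ∧
                (∀ i, 1 ≤ (δ i : ℕ) ∧ (δ i : ℕ) ≤ (ν i : ℕ)) then
              (Nat.multinomial Finset.univ (fun i => (ν i : ℕ)) : ℤ) * ∏ i, f (ν i) (δ i)
            else 0)
        = if (∑ i, (ν i : ℕ)) = n ∧ (∀ i, 1 ≤ (δ i : ℕ) ∧ (δ i : ℕ) ≤ (ν i : ℕ)) then
            (-1 : ℤ) ^ ((∑ i, (δ i : ℕ)) - l) *
              ((Nat.multinomial Finset.univ (fun i => (ν i : ℕ)) : ℤ) * ∏ i, f (ν i) (δ i))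
          else 0 := by
    intro ν δ
    by_cases hC : (∑ i, (ν i : ℕ)) = n ∧ (∀ i, 1 ≤ (δ i : ℕ) ∧ (δ i : ℕ) ≤ (ν i : ℕ))
    · rw [if_pos hC]
      have hmem : (∑ i, (δ i : ℕ)) ∈ Icc l n := by
        simp only [mem_Icc]
        constructor
        · calc l = ∑ _i : Fin l, 1 := by simp
            _ ≤ ∑ i, (δ i : ℕ) := Finset.sum_le_sum (fun i _ => (hC.2 i).1)
        · calc ∑ i, (δ i : ℕ) ≤ ∑ i, (ν i : ℕ) := Finset.sum_le_sum (fun i _ => (hC.2 i).2)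
            _ = n := hC.1
      rw [Finset.sum_eq_single (∑ i, (δ i : ℕ))]
      · rw [if_pos ⟨hC.1, rfl, hC.2⟩]
      · intro d _ hd
        rw [if_neg (fun h => hd (h.2.1.symm)), mul_zero]
      · intro h; exact absurd hmem h
    · rw [if_neg hC]
      apply Finset.sum_eq_zero
      intro d _
      rw [if_neg (fun h => hC ⟨h.1, h.2.2⟩), mul_zero]
  simp only [step2]
  -- split the outer condition and factorize the δ-sum
  have step3 : ∀ ν : Fin l → Fin (n + 1), (∑ i, (ν i : ℕ)) = n →
      ∑ δ : Fin l → Fin (n + 1),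
        (if (∀ i, 1 ≤ (δ i : ℕ) ∧ (δ i : ℕ) ≤ (ν i : ℕ)) then
            (-1 : ℤ) ^ ((∑ i, (δ i : ℕ)) - l) *
              ((Nat.multinomial Finset.univ (fun i => (ν i : ℕ)) : ℤ) * ∏ i, f (ν i) (δ i))
          else 0)
        = (Nat.multinomial Finset.univ (fun i => (ν i : ℕ)) : ℤ) *
            ∏ i, (∑ m ∈ Icc 1 (ν i : ℕ), (-1 : ℤ) ^ (m - 1) * f (ν i) m) := by
    intro ν hν
    have h1 : ∀ δ : Fin l → Fin (n + 1), (∀ i, 1 ≤ (δ i : ℕ) ∧ (δ i : ℕ) ≤ (ν i : ℕ)) →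
        (-1 : ℤ) ^ ((∑ i, (δ i : ℕ)) - l) *
              ((Nat.multinomial Finset.univ (fun i => (ν i : ℕ)) : ℤ) * ∏ i, f (ν i) (δ i))
          = (Nat.multinomial Finset.univ (fun i => (ν i : ℕ)) : ℤ) *
              ∏ i, ((-1 : ℤ) ^ ((δ i : ℕ) - 1) * f (ν i) (δ i)) := by
      intro δ hδ
      have hsum : ∑ i, ((δ i : ℕ) - 1) = (∑ i, (δ i : ℕ)) - l := by
        have h2 : (∑ i, ((δ i : ℕ) - 1)) + l = ∑ i, (δ i : ℕ) := by
          have e : ∑ i, (δ i : ℕ) = ∑ i, (((δ i : ℕ) - 1) + 1) :=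
            Finset.sum_congr rfl fun i _ => (Nat.sub_add_cancel (hδ i).1).symm
          rw [e, Finset.sum_add_distrib, Finset.sum_const, Finset.card_univ, Fintype.card_fin,
            smul_eq_mul, mul_one]
        exact Nat.eq_sub_of_add_eq h2
      rw [Finset.prod_mul_distrib, Finset.prod_pow_eq_pow_sum, hsum]
      ring
    calc ∑ δ : Fin l → Fin (n + 1),
        (if (∀ i, 1 ≤ (δ i : ℕ) ∧ (δ i : ℕ) ≤ (ν i : ℕ)) then
            (-1 : ℤ) ^ ((∑ i, (δ i : ℕ)) - l) *
              ((Nat.multinomial Finset.univ (fun i => (ν i : ℕ)) : ℤ) * ∏ i, f (ν i) (δ i))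
          else 0)
        = ∑ δ : Fin l → Fin (n + 1),
          (if (∀ i, 1 ≤ (δ i : ℕ) ∧ (δ i : ℕ) ≤ (ν i : ℕ)) then
            (Nat.multinomial Finset.univ (fun i => (ν i : ℕ)) : ℤ) *
              ∏ i, ((-1 : ℤ) ^ ((δ i : ℕ) - 1) * f (ν i) (δ i))
          else 0) := by
          refine Finset.sum_congr rfl fun δ _ => ?_
          by_cases hδ : ∀ i, 1 ≤ (δ i : ℕ) ∧ (δ i : ℕ) ≤ (ν i : ℕ)
          · rw [if_pos hδ, if_pos hδ, h1 δ hδ]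
          · rw [if_neg hδ, if_neg hδ]
      _ = (Nat.multinomial Finset.univ (fun i => (ν i : ℕ)) : ℤ) *
          ∑ δ : Fin l → Fin (n + 1),
          (if (∀ i, 1 ≤ (δ i : ℕ) ∧ (δ i : ℕ) ≤ (ν i : ℕ)) then
            ∏ i, ((-1 : ℤ) ^ ((δ i : ℕ) - 1) * f (ν i) (δ i))
          else 0) := by
          rw [Finset.mul_sum]
          refine Finset.sum_congr rfl fun δ _ => ?_
          split_ifs <;> ring
      _ = (Nat.multinomial Finset.univ (fun i => (ν i : ℕ)) : ℤ) *
          ∏ i, ∑ k ∈ Finset.univ.filter (fun k : Fin (n+1) => 1 ≤ (k:ℕ) ∧ (k:ℕ) ≤ (ν i : ℕ)),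
            ((-1 : ℤ) ^ ((k : ℕ) - 1) * f (ν i) (k : ℕ)) := by
          congr 1
          rw [← Finset.sum_filter, Finset.prod_univ_sum]
          apply Finset.sum_congr
          · ext δ
            simp [Fintype.mem_piFinset, forall_and]
          · intros; rfl
      _ = (Nat.multinomial Finset.univ (fun i => (ν i : ℕ)) : ℤ) *
          ∏ i, (∑ m ∈ Icc 1 (ν i : ℕ), (-1 : ℤ) ^ (m - 1) * f (ν i) m) := by
          congr 1
          exact Finset.prod_congr rfl fun i _ =>
            sum_fin_icc (ν i) (fun m => (-1 : ℤ) ^ (m - 1) * f (ν i) m)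
  -- reduce to the indicator sum
  have step4 : ∑ ν : Fin l → Fin (n + 1), ∑ δ : Fin l → Fin (n + 1),
      (if (∑ i, (ν i : ℕ)) = n ∧ (∀ i, 1 ≤ (δ i : ℕ) ∧ (δ i : ℕ) ≤ (ν i : ℕ)) then
            (-1 : ℤ) ^ ((∑ i, (δ i : ℕ)) - l) *
              ((Nat.multinomial Finset.univ (fun i => (ν i : ℕ)) : ℤ) * ∏ i, f (ν i) (δ i))
          else 0)
      = ∑ ν : Fin l → Fin (n + 1),
        (if (∑ i, (ν i : ℕ)) = n ∧ (∀ i, 1 ≤ (ν i : ℕ)) then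
            (Nat.multinomial Finset.univ (fun i => (ν i : ℕ)) : ℤ) else 0) := by
    refine Finset.sum_congr rfl fun ν _ => ?_
    by_cases hν : (∑ i, (ν i : ℕ)) = n
    · have e1 : ∑ δ : Fin l → Fin (n + 1),
          (if (∑ i, (ν i : ℕ)) = n ∧ (∀ i, 1 ≤ (δ i : ℕ) ∧ (δ i : ℕ) ≤ (ν i : ℕ)) then
            (-1 : ℤ) ^ ((∑ i, (δ i : ℕ)) - l) *
              ((Nat.multinomial Finset.univ (fun i => (ν i : ℕ)) : ℤ) * ∏ i, f (ν i) (δ i))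
          else 0)
          = ∑ δ : Fin l → Fin (n + 1),
          (if (∀ i, 1 ≤ (δ i : ℕ) ∧ (δ i : ℕ) ≤ (ν i : ℕ)) then
            (-1 : ℤ) ^ ((∑ i, (δ i : ℕ)) - l) *
              ((Nat.multinomial Finset.univ (fun i => (ν i : ℕ)) : ℤ) * ∏ i, f (ν i) (δ i))
          else 0) := by
        refine Finset.sum_congr rfl fun δ _ => ?_
        by_cases hδ : ∀ i, 1 ≤ (δ i : ℕ) ∧ (δ i : ℕ) ≤ (ν i : ℕ)
        · rw [if_pos ⟨hν, hδ⟩, if_pos hδ]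
        · rw [if_neg (fun h => hδ h.2), if_neg hδ]
      rw [e1, step3 ν hν]
      by_cases hpos : ∀ i, 1 ≤ (ν i : ℕ)
      · rw [if_pos ⟨hν, hpos⟩]
        have : ∀ i : Fin l, (∑ m ∈ Icc 1 (ν i : ℕ), (-1 : ℤ) ^ (m - 1) * f (ν i) m) = 1 :=
          fun i => hf (ν i) (hpos i)
        rw [Finset.prod_congr rfl (fun i _ => this i), Finset.prod_const_one, mul_one]
      · rw [if_neg (fun h => hpos h.2)]
        push_neg at hpos
        obtain ⟨i, hi⟩ := hpos
        have hi0 : (ν i : ℕ) = 0 := Nat.lt_one_iff.mp hi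
        have : (∑ m ∈ Icc 1 (ν i : ℕ), (-1 : ℤ) ^ (m - 1) * f (ν i) m) = 0 := by
          rw [hi0]
          simp
        rw [Finset.prod_eq_zero (Finset.mem_univ i) this, mul_zero]
    · rw [if_neg (fun h => hν h.1)]
      apply Finset.sum_eq_zero
      intro δ _
      rw [if_neg (fun h => hν h.1)]
  rw [step4]
  -- final bridge to T
  rw [T]
  rw [← Finset.sum_filter, ← Finset.sum_filter]
  apply Finset.sum_nbij' (i := fun (ν : Fin l → Fin (n+1)) => fun j => (ν j : ℕ))
    (j := fun (ρ : Fin l → ℕ) => fun j => (open Fin.NatCast in (ρ j : Fin (n+1))))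
  · intro ν hν
    simp only [Finset.mem_filter, Finset.mem_univ, true_and] at hν
    simp only [Finset.mem_filter, Fintype.mem_piFinset, mem_Icc]
    refine ⟨fun j => ⟨hν.2 j, ?_⟩, hν.1⟩
    calc (ν j : ℕ) ≤ ∑ i, (ν i : ℕ) :=
        Finset.single_le_sum (f := fun i => (ν i : ℕ)) (fun i _ => Nat.zero_le _)
          (Finset.mem_univ j)
      _ = n := hν.1
  · intro ρ hρ
    simp only [Finset.mem_filter, Fintype.mem_piFinset, mem_Icc] at hρ
    have hval : ∀ j, (((open Fin.NatCast in (ρ j : Fin (n+1))) : Fin (n+1)) : ℕ) = ρ j := fun j =>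
      Fin.val_cast_of_lt (Nat.lt_succ_of_le (hρ.1 j).2)
    simp only [Finset.mem_filter, Finset.mem_univ, true_and, hval]
    exact ⟨hρ.2, fun j => (hρ.1 j).1⟩
  · intro ν _
    funext j
    exact Fin.cast_val_eq_self (ν j)
  · intro ρ hρ
    simp only [Finset.mem_filter, Fintype.mem_piFinset, mem_Icc] at hρ
    funext j
    exact Fin.val_cast_of_lt (Nat.lt_succ_of_le (hρ.1 j).2)
  · intro ν _
    rfl
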